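/- Let f : S² → S² be the antipodal map on the unit 2-sphere. If C₁ and C₂ are nonempty closed connected subsets of S² with f(C₁) = C₁ and f(C₂) = C₂, and such that S² ∖ C₁ is a disjoint union of two open sets interchanged by f, then C₁ ∩ C₂ ≠ ∅. In particular, two disjoint embedded circles in S², each invariant under the antipodal map and each separating S² into two antipodally-swapped discs, cannot exist. -/

import Mathlib

/-!
Both pieces `U` and `V = -U` of `S² \ C₁` are open, so if `C₂` missed `C₁` its connectedness
would put it inside one piece, say `U`; antipodal invariance then puts it inside `-U = V` as well,
which is absurd for a nonempty set since `U` and `V` are disjoint.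
-/

open Set Function

section Swap

variable {X : Type*} {f : X → X} {C U V : Set X}

lemma Set.Nonempty.not_subset_of_image_subset_disjoint (hne : C.Nonempty) (hfC : f '' C = C)
    (hfU : f '' U ⊆ V) (hUV : Disjoint U V) : ¬ C ⊆ U := fun hCU =>
  have hCV : C ⊆ V := hfC ▸ (image_mono hCU).trans hfU
  hUV.ne_of_mem (hCU hne.some_mem) (hCV hne.some_mem) rfl

lemma IsPreconnected.not_subset_union_of_image_swap [TopologicalSpace X] (hC : IsPreconnected C)
    (hne : C.Nonempty) (hfC : f '' C = C) (hU : IsOpen U) (hV : IsOpen V) (hUV : Disjoint U V)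
    (hfU : f '' U ⊆ V) (hfV : f '' V ⊆ U) : ¬ C ⊆ U ∪ V := fun hCUV =>
  (hC.subset_or_subset hU hV hUV hCUV).elim
    (hne.not_subset_of_image_subset_disjoint hfC hfU hUV)
    (hne.not_subset_of_image_subset_disjoint hfC hfV hUV.symm)

end Swap

lemma Function.Involutive.image_eq_of_image_eq {α : Type*} {f : α → α} (hf : Involutive f)
    {s t : Set α} (h : f '' s = t) : f '' t = s := by
  rw [← h, image_image]
  simp only [hf _, image_id']

theorem stmt16_general (C₁ C₂ : Set (Metric.sphere (0 : EuclideanSpace ℝ (Fin 3)) 1))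
    (h₂ne : C₂.Nonempty)
    (h₂conn : IsConnected C₂)
    (h₂inv : (fun x => -x) '' C₂ = C₂)
    (hsep : ∃ U V : Set (Metric.sphere (0 : EuclideanSpace ℝ (Fin 3)) 1),
      IsOpen U ∧ IsOpen V ∧ Disjoint U V ∧ C₁ᶜ = U ∪ V ∧
      (fun x => -x) '' U = V) :
    (C₁ ∩ C₂).Nonempty := by
  obtain ⟨U, V, hU, hV, hUV, hcompl, hswap⟩ := hsep
  have hswap' : (fun x => -x) '' V = U := (neg_involutive).image_eq_of_image_eq hswap
  by_contra hmeet
  refine h₂conn.isPreconnected.not_subset_union_of_image_swap h₂ne h₂inv hU hV hUV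
    hswap.subset hswap'.subset ?_
  rw [← hcompl]
  exact fun x hx hx₁ => hmeet ⟨x, hx₁, hx⟩

/-- Two nonempty closed connected antipodally-invariant subsets of S², one of
which separates S² into two antipodally-swapped open sets, must intersect.
In particular S² does not contain two disjoint "great circles". -/
theorem stmt16 (C₁ C₂ : Set (Metric.sphere (0 : EuclideanSpace ℝ (Fin 3)) 1))
    (h₁ne : C₁.Nonempty) (h₂ne : C₂.Nonempty)
    (h₁cl : IsClosed C₁) (h₂cl : IsClosed C₂)
    (h₁conn : IsConnected C₁) (h₂conn : IsConnected C₂)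
    (h₁inv : (fun x => -x) '' C₁ = C₁) (h₂inv : (fun x => -x) '' C₂ = C₂)
    (hsep : ∃ U V : Set (Metric.sphere (0 : EuclideanSpace ℝ (Fin 3)) 1),
      IsOpen U ∧ IsOpen V ∧ Disjoint U V ∧ C₁ᶜ = U ∪ V ∧
      (fun x => -x) '' U = V) :
    (C₁ ∩ C₂).Nonempty :=
  stmt16_general C₁ C₂ h₂ne h₂conn h₂inv hsep
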